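/- arXiv:1703.05470 — 6 statements merged into one kernel-verified Lean document; each statement's English description precedes it below -/
import Mathlib

section
/- Let ⟨X₀,d₀⟩ and ⟨X₁,d₁⟩ be metric spaces. Then X₀ and X₁ have isometrically isomorphic completions if and only if there exists a metric space ⟨Z,d⟩ whose cardinality is at most the cardinal sum |X₀| + |X₁|, together with dense isometries ι₀ : X₀ → Z and ι₁ : X₁ → Z. -/
universe u

theorem my_denseRange_subtype {α : Type*} [TopologicalSpace α] {β : Type*}
    {S : Set α} {f : β → α} (hf : DenseRange f) (h : ∀ b, f b ∈ S) :
    DenseRange (fun b => (⟨f b, h b⟩ : S)) := by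
  intro z
  rw [closure_subtype]
  have : Subtype.val '' Set.range (fun b => (⟨f b, h b⟩ : S)) = Set.range f := by
    ext x
    simp [Set.mem_image, Set.mem_range]
  rw [this]
  exact hf z

/-- two metric spaces have isometrically isomorphic completions iff there is a
metric space `Z` of cardinality at most `|X₀| + |X₁|` together with dense isometries from
`X₀` and `X₁` into `Z`. -/
theorem isometric_completions_iff_common_amalgam
    {X₀ X₁ : Type u} [MetricSpace X₀] [MetricSpace X₁] :
    (∃ (C₀ C₁ : Type u) (m₀ : MetricSpace C₀) (m₁ : MetricSpace C₁),
      letI := m₀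
      letI := m₁
      CompleteSpace C₀ ∧ CompleteSpace C₁ ∧
      (∃ ι₀ : X₀ → C₀, Isometry ι₀ ∧ DenseRange ι₀) ∧
      (∃ ι₁ : X₁ → C₁, Isometry ι₁ ∧ DenseRange ι₁) ∧
      (∃ φ : C₀ → C₁, Isometry φ ∧ Function.Surjective φ))
    ↔ (∃ (Z : Type u) (mZ : MetricSpace Z),
      letI := mZ
      Cardinal.mk Z ≤ Cardinal.mk X₀ + Cardinal.mk X₁ ∧
      (∃ ι₀ : X₀ → Z, Isometry ι₀ ∧ DenseRange ι₀) ∧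
      (∃ ι₁ : X₁ → Z, Isometry ι₁ ∧ DenseRange ι₁)) := by
  constructor
  · rintro ⟨C₀, C₁, m₀, m₁, hc₀, hc₁, ⟨ι₀, hι₀, hd₀⟩, ⟨ι₁, hι₁, hd₁⟩, ⟨φ, hφ, hφs⟩⟩
    -- inverse of φ
    let e : C₀ ≃ C₁ := Equiv.ofBijective φ ⟨hφ.injective, hφs⟩
    have hψ : Isometry e.symm := fun a b => by
      calc edist (e.symm a) (e.symm b) = edist (φ (e.symm a)) (φ (e.symm b)) := (hφ _ _).symm
        _ = edist a b := by
            rw [show φ (e.symm a) = a from e.apply_symm_apply a,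
              show φ (e.symm b) = b from e.apply_symm_apply b]
    let f₁ : X₁ → C₀ := fun x => e.symm (ι₁ x)
    have hf₁ : Isometry f₁ := fun a b => by
      simp only [f₁, hψ.edist_eq, hι₁.edist_eq]
    have hdf₁ : DenseRange f₁ := by
      have hsurj : Function.Surjective (e.symm : C₁ → C₀) := e.symm.surjective
      exact (hsurj.denseRange).comp hd₁ hψ.continuous
    -- the amalgam
    let S : Set C₀ := Set.range ι₀ ∪ Set.range f₁
    refine ⟨S, inferInstance, ?_, ?_, ?_⟩
    · calc Cardinal.mk S ≤ Cardinal.mk (Set.range ι₀) + Cardinal.mk (Set.range f₁) :=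
            Cardinal.mk_union_le _ _
        _ ≤ Cardinal.mk X₀ + Cardinal.mk X₁ :=
            add_le_add Cardinal.mk_range_le Cardinal.mk_range_le
    · refine ⟨fun x => ⟨ι₀ x, Or.inl ⟨x, rfl⟩⟩, ?_, ?_⟩
      · intro a b
        simpa [Subtype.edist_eq] using hι₀ a b
      · exact my_denseRange_subtype hd₀ _
    · refine ⟨fun x => ⟨f₁ x, Or.inr ⟨x, rfl⟩⟩, ?_, ?_⟩
      · intro a b
        simpa [Subtype.edist_eq] using hf₁ a b
      · exact my_denseRange_subtype hdf₁ _
  · rintro ⟨Z, mZ, _, ⟨ι₀, hι₀, hd₀⟩, ⟨ι₁, hι₁, hd₁⟩⟩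
    refine ⟨UniformSpace.Completion Z, UniformSpace.Completion Z, inferInstance, inferInstance,
      inferInstance, inferInstance, ?_, ?_, ⟨id, isometry_id, Function.surjective_id⟩⟩
    · refine ⟨fun x => (ι₀ x : UniformSpace.Completion Z), ?_, ?_⟩
      · exact (UniformSpace.Completion.coe_isometry).comp hι₀
      · exact UniformSpace.Completion.denseRange_coe.comp hd₀
          (UniformSpace.Completion.continuous_coe Z)
    · refine ⟨fun x => (ι₁ x : UniformSpace.Completion Z), ?_, ?_⟩
      · exact (UniformSpace.Completion.coe_isometry).comp hι₁
      · exact UniformSpace.Completion.denseRange_coe.comp hd₁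
          (UniformSpace.Completion.continuous_coe Z)
end

section
/- The relation ≈_di, i.e., the set of pairs (d₀, d₁) ∈ ℝ^(ℕ×ℕ) × ℝ^(ℕ×ℕ) such that d₀ and d₁ are metrics on ℕ and there exists a metric d* on ℕ together with dense isometries g₀ : ⟨ℕ,d₀⟩ → ⟨ℕ,d*⟩ and g₁ : ⟨ℕ,d₁⟩ → ⟨ℕ,d*⟩, is an analytic subset of ℝ^(ℕ×ℕ) × ℝ^(ℕ×ℕ) (with the product topology). -/
/-!
The relation is the projection to the first factor of the set of tuples `(d₀, d₁, d*, g₀, g₁)`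
satisfying the defining conditions. Each condition is a countable Boolean combination of
conditions on finitely many coordinates (density needs only `ε = 1/(k+1)`), so that set is
Borel in a Polish space, and continuous images of Borel subsets of Polish spaces are analytic.
-/

/-- `d : ℕ × ℕ → ℝ` is a metric on `ℕ`. -/
def IsMetricOnNat (d : ℕ × ℕ → ℝ) : Prop :=
  (∀ m n : ℕ, d (m, n) = 0 ↔ m = n) ∧
  (∀ m n : ℕ, d (m, n) = d (n, m)) ∧
  (∀ m n k : ℕ, d (m, k) ≤ d (m, n) + d (n, k))

/-- `g : ℕ → ℕ` is a dense isometry from `⟨ℕ,d⟩` to `⟨ℕ,d'⟩`: it preserves distances and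
its range is dense in `⟨ℕ,d'⟩`. -/
def DenseIsomCode (d d' : ℕ × ℕ → ℝ) (g : ℕ → ℕ) : Prop :=
  (∀ m n : ℕ, d' (g m, g n) = d (m, n)) ∧
  (∀ n : ℕ, ∀ ε : ℝ, 0 < ε → ∃ m : ℕ, d' (n, g m) < ε)

open MeasureTheory Set

theorem measurable_eval_of_countable {α β : Type*} [Countable α] [MeasurableSpace α]
    [MeasurableSingletonClass α] [MeasurableSpace β] :
    Measurable fun p : (α → β) × α => p.1 p.2 :=
  measurable_from_prod_countable_left fun a => measurable_pi_apply a

theorem denseIsomCode_iff (d d' : ℕ × ℕ → ℝ) (g : ℕ → ℕ) :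
    DenseIsomCode d d' g ↔
      (∀ m n : ℕ, d' (g m, g n) = d (m, n)) ∧
        ∀ n k : ℕ, ∃ m : ℕ, d' (n, g m) < 1 / (k + 1) := by
  refine and_congr_right fun _ => ⟨fun h n k => h n _ Nat.one_div_pos_of_nat, fun h n ε hε => ?_⟩
  obtain ⟨k, hk⟩ := exists_nat_one_div_lt hε
  obtain ⟨m, hm⟩ := h n k
  exact ⟨m, hm.trans hk⟩

theorem measurableSet_isMetricOnNat : MeasurableSet {d : ℕ × ℕ → ℝ | IsMetricOnNat d} := by
  have hev (q : ℕ × ℕ) : Measurable fun d : ℕ × ℕ → ℝ => d q := measurable_pi_apply q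
  simp only [IsMetricOnNat, ofPred_and, ofPred_forall]
  refine .inter (.iInter fun m => .iInter fun n => ?_) (.inter ?_ ?_)
  · by_cases h : m = n
    · simpa only [h, iff_true] using measurableSet_eq_fun (hev (n, n)) measurable_const
    · simp only [h, iff_false]
      exact (measurableSet_eq_fun (hev (m, n)) measurable_const).compl
  · exact .iInter fun m => .iInter fun n => measurableSet_eq_fun (hev (m, n)) (hev (n, m))
  · exact .iInter fun m => .iInter fun n => .iInter fun k =>
      measurableSet_le (hev (m, k)) ((hev (m, n)).add (hev (n, k)))

theorem measurableSet_denseIsomCode :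
    MeasurableSet {x : (ℕ × ℕ → ℝ) × (ℕ × ℕ → ℝ) × (ℕ → ℕ) | DenseIsomCode x.1 x.2.1 x.2.2} := by
  have hev {q : (ℕ × ℕ → ℝ) × (ℕ × ℕ → ℝ) × (ℕ → ℕ) → ℕ × ℕ} (hq : Measurable q) :
      Measurable fun x : (ℕ × ℕ → ℝ) × (ℕ × ℕ → ℝ) × (ℕ → ℕ) => x.2.1 (q x) :=
    measurable_eval_of_countable.comp (measurable_snd.fst.prodMk hq)
  have hg (m : ℕ) : Measurable fun x : (ℕ × ℕ → ℝ) × (ℕ × ℕ → ℝ) × (ℕ → ℕ) => x.2.2 m :=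
    (measurable_pi_apply m).comp measurable_snd.snd
  simp only [denseIsomCode_iff, ofPred_and, ofPred_forall, ofPred_exists]
  refine .inter (.iInter fun m => .iInter fun n => ?_) (.iInter fun n => .iInter fun k =>
    .iUnion fun m => measurableSet_lt (hev (measurable_const.prodMk (hg m))) measurable_const)
  exact measurableSet_eq_fun (hev ((hg m).prodMk (hg n)))
    ((measurable_pi_apply (m, n)).comp measurable_fst)

theorem MeasurableSet.analyticSet_image_fst {X Y : Type*} [TopologicalSpace X] [PolishSpace X]
    [MeasurableSpace X] [BorelSpace X] [TopologicalSpace Y] [PolishSpace Y] [MeasurableSpace Y]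
    [BorelSpace Y] {S : Set (X × Y)} (hS : MeasurableSet S) : AnalyticSet (Prod.fst '' S) :=
  hS.analyticSet.image_of_continuous continuous_fst

/-- the relation `≈_di` (there is a common metric `d*` on `ℕ` with dense
isometries from `⟨ℕ,d₀⟩` and `⟨ℕ,d₁⟩` into `⟨ℕ,d*⟩`) is an analytic subset of
`ℝ^(ℕ×ℕ) × ℝ^(ℕ×ℕ)`. -/
theorem analyticSet_commonAmalgamRel :
    MeasureTheory.AnalyticSet
      {p : (ℕ × ℕ → ℝ) × (ℕ × ℕ → ℝ) |
        IsMetricOnNat p.1 ∧ IsMetricOnNat p.2 ∧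
        ∃ dstar : ℕ × ℕ → ℝ, IsMetricOnNat dstar ∧
          ∃ g₀ g₁ : ℕ → ℕ, DenseIsomCode p.1 dstar g₀ ∧ DenseIsomCode p.2 dstar g₁} := by
  let S : Set (((ℕ × ℕ → ℝ) × (ℕ × ℕ → ℝ)) × (ℕ × ℕ → ℝ) × (ℕ → ℕ) × (ℕ → ℕ)) :=
    {z | IsMetricOnNat z.1.1 ∧ IsMetricOnNat z.1.2 ∧ IsMetricOnNat z.2.1 ∧
      DenseIsomCode z.1.1 z.2.1 z.2.2.1 ∧ DenseIsomCode z.1.2 z.2.1 z.2.2.2}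
  have hS : MeasurableSet S :=
    (measurable_fst.fst measurableSet_isMetricOnNat).inter <|
    (measurable_fst.snd measurableSet_isMetricOnNat).inter <|
    (measurable_snd.fst measurableSet_isMetricOnNat).inter <|
    ((measurable_fst.fst.prodMk (measurable_snd.fst.prodMk measurable_snd.snd.fst))
      measurableSet_denseIsomCode).inter
    ((measurable_fst.snd.prodMk (measurable_snd.fst.prodMk measurable_snd.snd.snd))
      measurableSet_denseIsomCode)
  convert hS.analyticSet_image_fst using 1
  ext p
  constructor
  · rintro ⟨h₀, h₁, dstar, hd, g₀, g₁, hg₀, hg₁⟩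
    exact ⟨(p, dstar, g₀, g₁), ⟨h₀, h₁, hd, hg₀, hg₁⟩, rfl⟩
  · rintro ⟨z, ⟨h₀, h₁, hd, hg₀, hg₁⟩, rfl⟩
    exact ⟨h₀, h₁, z.2.1, hd, z.2.2.1, z.2.2.2, hg₀, hg₁⟩
end

section
/- Let ι : ⟨X₀,d₀⟩ → ⟨X₁,d₁⟩ be a dense isometry between metric spaces and let f : ⟨X₁,d₁⟩ → ⟨X₂,d₂⟩ be a function between metric spaces. Then f is Cauchy-continuous if and only if f is continuous and f ∘ ι is Cauchy-continuous. -/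
/-- A function between metric spaces is Cauchy-continuous if it maps Cauchy sequences
to Cauchy sequences. -/
def CauchyContinuous {X Y : Type*} [MetricSpace X] [MetricSpace Y] (f : X → Y) : Prop :=
  ∀ x : ℕ → X, CauchySeq x → CauchySeq (f ∘ x)

private lemma cauchySeq_of_close {Y : Type*} [MetricSpace Y] {u v : ℕ → Y}
    (hu : CauchySeq u) (h : ∀ n, dist (u n) (v n) ≤ 1 / (n + 1)) : CauchySeq v := by
  rw [Metric.cauchySeq_iff] at hu ⊢
  intro ε hε
  obtain ⟨N₁, hN₁⟩ := hu (ε / 3) (by linarith)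
  obtain ⟨N₂, hN₂⟩ := exists_nat_gt (3 / ε)
  refine ⟨max N₁ N₂, fun m hm n hn => ?_⟩
  have hb : ∀ k : ℕ, N₂ ≤ k → (1 : ℝ) / (k + 1) < ε / 3 := by
    intro k hk
    have hk' : (N₂ : ℝ) ≤ k := Nat.cast_le.mpr hk
    have h3 : 3 / ε < (k : ℝ) + 1 := by linarith
    have h4 : 3 < ((k : ℝ) + 1) * ε := (div_lt_iff₀ hε).mp h3
    rw [div_lt_div_iff₀ (by positivity) (by norm_num)]
    nlinarith
  have h1 := h m
  have h2 := h n
  have hd := hN₁ m (le_trans (le_max_left _ _) hm) n (le_trans (le_max_left _ _) hn)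
  have hbm := hb m (le_trans (le_max_right _ _) hm)
  have hbn := hb n (le_trans (le_max_right _ _) hn)
  calc dist (v m) (v n) ≤ dist (v m) (u m) + dist (u m) (u n) + dist (u n) (v n) :=
        dist_triangle4 _ _ _ _
    _ < ε := by rw [dist_comm (v m)] ; linarith

/-- if `ι : X₀ → X₁` is a dense isometry and `f : X₁ → X₂`, then `f` is
Cauchy-continuous iff `f` is continuous and `f ∘ ι` is Cauchy-continuous. -/
theorem cauchyContinuous_iff_continuous_and_comp_denseIsometry
    {X₀ X₁ X₂ : Type*} [MetricSpace X₀] [MetricSpace X₁] [MetricSpace X₂]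
    (ι : X₀ → X₁) (hι : Isometry ι) (hdense : DenseRange ι)
    (f : X₁ → X₂) :
    CauchyContinuous f ↔ Continuous f ∧ CauchyContinuous (f ∘ ι) := by
  constructor
  · intro hf
    constructor
    · -- continuity via sequential continuity
      rw [continuous_iff_seqContinuous]
      intro x a hx
      -- interleaved sequence
      set z : ℕ → X₁ := fun n => if n % 2 = 0 then a else x (n / 2) with hz
      have hzt : Filter.Tendsto z Filter.atTop (nhds a) := by
        rw [Metric.tendsto_atTop] at hx ⊢
        intro ε hε
        obtain ⟨N, hN⟩ := hx ε hε
        refine ⟨2 * N, fun n hn => ?_⟩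
        by_cases hpar : n % 2 = 0
        · simp [hz, hpar, hε]
        · simp only [hz, hpar, if_false]
          exact hN _ (by omega)
      have hzc : CauchySeq (f ∘ z) := hf z hzt.cauchySeq
      have heven : Filter.Tendsto ((f ∘ z) ∘ (fun n => 2 * n)) Filter.atTop (nhds (f a)) := by
        have : ((f ∘ z) ∘ (fun n => 2 * n)) = fun _ => f a := by
          funext n; simp [hz, Nat.mul_mod_right]
        rw [this]; exact tendsto_const_nhds
      have hlim : Filter.Tendsto (f ∘ z) Filter.atTop (nhds (f a)) :=
        tendsto_nhds_of_cauchySeq_of_subseq hzc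
          (Filter.tendsto_atTop_atTop.mpr (fun b => ⟨b, fun a ha => by omega⟩)) heven
      have hodd : Filter.Tendsto ((f ∘ z) ∘ (fun n => 2 * n + 1)) Filter.atTop (nhds (f a)) :=
        hlim.comp (Filter.tendsto_atTop_atTop.mpr (fun b => ⟨b, fun a ha => by omega⟩))
      have : ((f ∘ z) ∘ (fun n => 2 * n + 1)) = fun n => f (x n) := by
        funext n
        simp only [Function.comp, hz]
        rw [if_neg (by omega), show (2 * n + 1) / 2 = n by omega]
      rwa [this] at hodd
    · intro y hy
      exact hf (ι ∘ y) (hι.uniformContinuous.comp_cauchySeq hy)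
  · rintro ⟨hc, hcc⟩ x hx
    -- for each n, pick y n with ι (y n) close to x n and f (ι (y n)) close to f (x n)
    have key : ∀ n : ℕ, ∃ y : X₀, dist (ι y) (x n) ≤ 1 / (n + 1) ∧
        dist (f (ι y)) (f (x n)) ≤ 1 / (n + 1) := by
      intro n
      have hcont := Metric.continuous_iff.mp hc (x n) (1 / (n + 1)) (by positivity)
      obtain ⟨δ, hδ, hδ'⟩ := hcont
      obtain ⟨y, hy⟩ := Metric.denseRange_iff.mp hdense (x n) (min δ (1 / (n + 1)))
        (lt_min hδ (by positivity))
      refine ⟨y, le_of_lt (by rw [dist_comm]; exact lt_of_lt_of_le hy (min_le_right _ _)), ?_⟩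
      refine le_of_lt (hδ' _ ?_)
      rw [dist_comm] at hy
      exact lt_of_lt_of_le hy (min_le_left _ _)
    choose y hy1 hy2 using key
    have hιy : CauchySeq (ι ∘ y) := by
      apply cauchySeq_of_close (v := ι ∘ y) hx
      intro n
      rw [dist_comm]
      exact hy1 n
    have hy' : CauchySeq y := by
      rw [Metric.cauchySeq_iff] at hιy ⊢
      intro ε hε
      obtain ⟨N, hN⟩ := hιy ε hε
      exact ⟨N, fun m hm n hn => by rw [← hι.dist_eq]; exact hN m hm n hn⟩
    have hfιy : CauchySeq (f ∘ ι ∘ y) := hcc y hy'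
    exact cauchySeq_of_close hfιy (fun n => hy2 n)
end

section
/- Let ⟨X,d_X⟩ and ⟨Y,d_Y⟩ be metric spaces, let ⟨X*,d*_X,ι_X⟩ and ⟨Y*,d*_Y,ι_Y⟩ be their respective completions, and let f̂ : X* → Y* be a continuous function. Then there exists a metric space ⟨Z,d'⟩ of cardinality at most the cardinal sum |X| + |Y|, a dense isometry ι : ⟨Y,d_Y⟩ → ⟨Z,d'⟩, and a dense isometry ι' : ⟨Z,d'⟩ → ⟨Y*,d*_Y⟩ such that the range of f̂ ∘ ι_X is contained in the range of ι'. -/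
/-! Take `Z` to be the subspace `range (f̂ ∘ ι_X) ∪ range ι_Y` of `Y*`: it is covered by images of
`X` and `Y`, and it contains `range ι_Y`, which is dense both in `Y*` and in `Z`. -/

universe u

open Set Cardinal

section CodRestrict

variable {α X : Type*} {f : α → X} {s : Set X}

theorem DenseRange.codRestrict [TopologicalSpace X] (hf : DenseRange f) (h : ∀ a, f a ∈ s) :
    DenseRange (s.codRestrict f h) := by
  rw [DenseRange, Subtype.dense_iff, ← range_comp]
  exact fun x _ => hf x

theorem Isometry.codRestrict [PseudoEMetricSpace α] [PseudoEMetricSpace X] (hf : Isometry f)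
    (h : ∀ a, f a ∈ s) : Isometry (s.codRestrict f h) :=
  hf

end CodRestrict

theorem intermediate_code_for_extension_general
    {X Y Xs Ys : Type u} [MetricSpace Y] [MetricSpace Ys]
    (ιX : X → Xs)
    (ιY : Y → Ys) (hιY : Isometry ιY) (hιYd : DenseRange ιY)
    (fhat : Xs → Ys) :
    ∃ (Z : Type u) (mZ : MetricSpace Z) (ι : Y → Z) (ι' : Z → Ys),
      Cardinal.mk Z ≤ Cardinal.mk X + Cardinal.mk Y ∧
      (letI := mZ
       Isometry ι ∧ DenseRange ι ∧ Isometry ι' ∧ DenseRange ι' ∧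
       Set.range (fhat ∘ ιX) ⊆ Set.range ι') := by
  set Z : Set Ys := range (fhat ∘ ιX) ∪ range ιY
  have hιYZ : ∀ y, ιY y ∈ Z := fun y => Or.inr (mem_range_self y)
  refine ⟨Z, inferInstance, Z.codRestrict ιY hιYZ, Subtype.val, ?_, hιY.codRestrict hιYZ,
    hιYd.codRestrict hιYZ, isometry_subtype_coe, ?_, ?_⟩
  · calc #Z ≤ #(range (fhat ∘ ιX)) + #(range ιY) := mk_union_le _ _
      _ ≤ #X + #Y := add_le_add mk_range_le mk_range_le
  · exact denseRange_subtype_val.2 (hιYd.mono subset_union_right)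
  · rw [Subtype.range_coe]
    exact subset_union_left

/-- given completions `⟨X*,ι_X⟩` of `X` and `⟨Y*,ι_Y⟩` of `Y` and a continuous
`f̂ : X* → Y*`, there is a metric space `Z` of cardinality at most `|X| + |Y|`, a dense
isometry `ι : Y → Z` and a dense isometry `ι' : Z → Y*` with
`range (f̂ ∘ ι_X) ⊆ range ι'`. -/
theorem intermediate_code_for_extension
    {X Y Xs Ys : Type u} [MetricSpace X] [MetricSpace Y] [MetricSpace Xs] [MetricSpace Ys]
    [CompleteSpace Xs] [CompleteSpace Ys]
    (ιX : X → Xs) (hιX : Isometry ιX) (hιXd : DenseRange ιX)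
    (ιY : Y → Ys) (hιY : Isometry ιY) (hιYd : DenseRange ιY)
    (fhat : Xs → Ys) (hfhat : Continuous fhat) :
    ∃ (Z : Type u) (mZ : MetricSpace Z) (ι : Y → Z) (ι' : Z → Ys),
      Cardinal.mk Z ≤ Cardinal.mk X + Cardinal.mk Y ∧
      (letI := mZ
       Isometry ι ∧ DenseRange ι ∧ Isometry ι' ∧ DenseRange ι' ∧
       Set.range (fhat ∘ ιX) ⊆ Set.range ι') :=
  intermediate_code_for_extension_general ιX ιY hιY hιYd fhat
end

section
/- For e = 0,1, let d_e and d'_e be metrics on ℕ and let g_e : ⟨ℕ,d_e⟩ → ⟨ℕ,d'_e⟩ be Cauchy-continuous. Then the following are equivalent: (1) there exist complete separable metric spaces ⟨X,d_X⟩ and ⟨Y,d_Y⟩, a continuous function f : X → Y, and, for each e = 0,1, dense isometries ι_e : ⟨ℕ,d_e⟩ → ⟨X,d_X⟩ and ι'_e : ⟨ℕ,d'_e⟩ → ⟨Y,d_Y⟩ with f ∘ ι_e = ι'_e ∘ g_e; (2) there exist metrics d and d' on ℕ, a Cauchy-continuous function g : ⟨ℕ,d⟩ → ⟨ℕ,d'⟩,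 and, for each e = 0,1, dense isometries ι_e : ⟨ℕ,d_e⟩ → ⟨ℕ,d⟩ and ι'_e : ⟨ℕ,d'_e⟩ → ⟨ℕ,d'⟩ with ι'_e ∘ g_e = g ∘ ι_e. -/
open Filter Topology UniformSpace

section CCAux

/-- interleaving of two sequences -/
def il {α : Type*} (u v : ℕ → α) (n : ℕ) : α :=
  if n % 2 = 0 then u (n / 2) else v (n / 2)

lemma il_even {α : Type*} (u v : ℕ → α) (n : ℕ) : il u v (2 * n) = u n := by
  have h1 : (2 * n) % 2 = 0 := by omega
  have h2 : (2 * n) / 2 = n := by omega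
  simp [il, h1, h2]

lemma il_odd {α : Type*} (u v : ℕ → α) (n : ℕ) : il u v (2 * n + 1) = v n := by
  have h1 : (2 * n + 1) % 2 = 1 := by omega
  have h2 : (2 * n + 1) / 2 = n := by omega
  simp [il, h1, h2]

lemma tendsto_il {α : Type*} [TopologicalSpace α] {u v : ℕ → α} {x : α}
    (hu : Tendsto u atTop (𝓝 x)) (hv : Tendsto v atTop (𝓝 x)) :
    Tendsto (il u v) atTop (𝓝 x) := by
  rw [tendsto_atTop'] at hu hv ⊢
  intro s hs
  obtain ⟨N₁, h₁⟩ := hu s hs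
  obtain ⟨N₂, h₂⟩ := hv s hs
  refine ⟨2 * max N₁ N₂, fun n hn => ?_⟩
  unfold il
  split
  · exact h₁ _ (by omega)
  · exact h₂ _ (by omega)

lemma cauchySeq_of_dist_eq {M X : Type*} [PseudoMetricSpace M] [PseudoMetricSpace X]
    {i : M → X} (hi : ∀ a b, dist (i a) (i b) = dist a b) {w : ℕ → M}
    (hw : CauchySeq (i ∘ w)) : CauchySeq w := by
  rw [Metric.cauchySeq_iff] at hw ⊢
  intro ε hε
  obtain ⟨N, hN⟩ := hw ε hε
  exact ⟨N, fun m hm n hn => by rw [← hi]; exact hN m hm n hn⟩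

lemma cauchySeq_comp_of_dist_eq {M X : Type*} [PseudoMetricSpace M] [PseudoMetricSpace X]
    {i : M → X} (hi : ∀ a b, dist (i a) (i b) = dist a b) {w : ℕ → M}
    (hw : CauchySeq w) : CauchySeq (i ∘ w) := by
  rw [Metric.cauchySeq_iff] at hw ⊢
  intro ε hε
  obtain ⟨N, hN⟩ := hw ε hε
  exact ⟨N, fun m hm n hn => by rw [Function.comp, Function.comp, hi]; exact hN m hm n hn⟩

lemma strictMono_two_mul : StrictMono (fun n : ℕ => 2 * n) := fun a b h => by simpa using h

lemma strictMono_two_mul_add_one : StrictMono (fun n : ℕ => 2 * n + 1) :=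
  fun a b h => by simpa using h

/-- A Cauchy-sequence-continuous map into a complete metric space extends continuously
to the completion. -/
lemma extend_cc {M Y : Type*} [MetricSpace M] [MetricSpace Y] [CompleteSpace Y]
    (g : M → Y) (hg : ∀ u : ℕ → M, CauchySeq u → CauchySeq (g ∘ u)) :
    ∃ f : Completion M → Y, Continuous f ∧ ∀ m : M, f (m : Completion M) = g m := by
  have hgcont : Continuous g := by
    apply SeqContinuous.continuous
    intro u x hux
    set w : ℕ → M := il u (fun _ => x) with hw
    have hwt : Tendsto w atTop (𝓝 x) := tendsto_il hux tendsto_const_nhds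
    have hgw : CauchySeq (g ∘ w) := hg _ hwt.cauchySeq
    have hodd : Tendsto ((g ∘ w) ∘ fun n => 2 * n + 1) atTop (𝓝 (g x)) := by
      have : ((g ∘ w) ∘ fun n => 2 * n + 1) = fun _ => g x := by
        funext n; simp [hw, Function.comp, il_odd]
      rw [this]; exact tendsto_const_nhds
    have hlim : Tendsto (g ∘ w) atTop (𝓝 (g x)) :=
      tendsto_nhds_of_cauchySeq_of_subseq hgw strictMono_two_mul_add_one.tendsto_atTop hodd
    have heven := hlim.comp strictMono_two_mul.tendsto_atTop
    have : (g ∘ w) ∘ (fun n : ℕ => 2 * n) = g ∘ u := by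
      funext n; simp [hw, Function.comp, il_even]
    rwa [this] at heven
  have hisom : ∀ a b : M, dist ((a : Completion M)) ((b : Completion M)) = dist a b :=
    fun a b => Completion.dist_eq a b
  have di : IsDenseInducing ((↑) : M → Completion M) := Completion.isDenseInducing_coe
  have key : ∀ x : Completion M,
      ∃ y : Y, Tendsto g (Filter.comap ((↑) : M → Completion M) (𝓝 x)) (𝓝 y) := by
    intro x
    have hx : x ∈ closure (Set.range ((↑) : M → Completion M)) := by
      rw [(Completion.denseRange_coe (α := M)).closure_range]; trivial
    obtain ⟨c, hc, hct⟩ := mem_closure_iff_seq_limit.1 hx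
    choose m hm using hc
    have hct' : Tendsto (fun n => (m n : Completion M)) atTop (𝓝 x) := by
      simpa [hm] using hct
    have hmc : CauchySeq m := cauchySeq_of_dist_eq hisom (by
      have : ((↑) : M → Completion M) ∘ m = fun n => (m n : Completion M) := rfl
      rw [this]; exact hct'.cauchySeq)
    obtain ⟨y, hy⟩ := cauchySeq_tendsto_of_complete (hg _ hmc)
    refine ⟨y, ?_⟩
    rw [tendsto_iff_seq_tendsto]
    intro u hu
    have huc : Tendsto (fun n => (u n : Completion M)) atTop (𝓝 x) := by
      have h2 := tendsto_comap_iff.mp hu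
      exact h2
    set w : ℕ → M := il u m with hwdef
    have hwt : Tendsto (fun n => (w n : Completion M)) atTop (𝓝 x) := by
      have : (fun n => (w n : Completion M)) = il (fun n => (u n : Completion M))
          (fun n => (m n : Completion M)) := by
        funext n; unfold w; unfold il; split <;> rfl
      rw [this]; exact tendsto_il huc hct'
    have hwc : CauchySeq w := cauchySeq_of_dist_eq hisom (by
      have : ((↑) : M → Completion M) ∘ w = fun n => (w n : Completion M) := rfl
      rw [this]; exact hwt.cauchySeq)
    have hgw : CauchySeq (g ∘ w) := hg _ hwc
    have hodd : Tendsto ((g ∘ w) ∘ fun n => 2 * n + 1) atTop (𝓝 y) := by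
      have : ((g ∘ w) ∘ fun n => 2 * n + 1) = g ∘ m := by
        funext n; simp [hwdef, Function.comp, il_odd]
      rw [this]; exact hy
    have hlim : Tendsto (g ∘ w) atTop (𝓝 y) :=
      tendsto_nhds_of_cauchySeq_of_subseq hgw strictMono_two_mul_add_one.tendsto_atTop hodd
    have heven := hlim.comp strictMono_two_mul.tendsto_atTop
    have : (g ∘ w) ∘ (fun n : ℕ => 2 * n) = g ∘ u := by
      funext n; simp [hwdef, Function.comp, il_even]
    rwa [this] at heven
  exact ⟨di.extend g, di.continuous_extend key, fun m => di.extend_eq hgcont m⟩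

end CCAux

/-- `x : ℕ → ℕ` is a Cauchy sequence with respect to the metric `d` on `ℕ`. -/
def CauchySeqCode (d : ℕ × ℕ → ℝ) (x : ℕ → ℕ) : Prop :=
  ∀ ε : ℝ, 0 < ε → ∃ N : ℕ, ∀ m ≥ N, ∀ n ≥ N, d (x m, x n) < ε

/-- `g : ℕ → ℕ` is Cauchy-continuous from `⟨ℕ,d⟩` to `⟨ℕ,d'⟩`. -/
def CauchyContCode (d d' : ℕ × ℕ → ℝ) (g : ℕ → ℕ) : Prop :=
  ∀ x : ℕ → ℕ, CauchySeqCode d x → CauchySeqCode d' (g ∘ x)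

/-- `ι : ℕ → X` is a dense isometry from the code `⟨ℕ,d⟩` into the metric space `X`. -/
def DenseIsomCodeTo (d : ℕ × ℕ → ℝ) {X : Type} [MetricSpace X] (ι : ℕ → X) : Prop :=
  (∀ m n : ℕ, dist (ι m) (ι n) = d (m, n)) ∧ DenseRange ι

/-- Type synonym for `ℕ` carrying the metric coded by `d`. -/
def Pt (_d : ℕ × ℕ → ℝ) : Type := ℕ

def Pt.mk (d : ℕ × ℕ → ℝ) (n : ℕ) : Pt d := n

def Pt.toNat {d : ℕ × ℕ → ℝ} (n : Pt d) : ℕ := n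

instance (d : ℕ × ℕ → ℝ) : Countable (Pt d) := inferInstanceAs (Countable ℕ)

/-- The metric space structure on `Pt d` coming from the code `d`. -/
def metOf (d : ℕ × ℕ → ℝ) (h : IsMetricOnNat d) : MetricSpace (Pt d) where
  dist m n := d (Pt.toNat m, Pt.toNat n)
  dist_self n := (h.1 _ _).2 rfl
  dist_comm m n := h.2.1 _ _
  dist_triangle x y z := h.2.2 _ _ _
  eq_of_dist_eq_zero := fun hxy => (h.1 _ _).1 hxy

/-- two Cauchy-continuous codes `(g₀,d₀,d'₀)` and `(g₁,d₁,d'₁)` code the same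
continuous function between Polish metric spaces iff they are `≈_cdi`-equivalent. -/
theorem code_same_continuous_function_iff
    (d₀ d'₀ d₁ d'₁ : ℕ × ℕ → ℝ) (g₀ g₁ : ℕ → ℕ)
    (hd₀ : IsMetricOnNat d₀) (hd'₀ : IsMetricOnNat d'₀)
    (hd₁ : IsMetricOnNat d₁) (hd'₁ : IsMetricOnNat d'₁)
    (hg₀ : CauchyContCode d₀ d'₀ g₀) (hg₁ : CauchyContCode d₁ d'₁ g₁) :
    (∃ (X Y : Type) (mX : MetricSpace X) (mY : MetricSpace Y),
      letI := mX
      letI := mY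
      CompleteSpace X ∧ TopologicalSpace.SeparableSpace X ∧
      CompleteSpace Y ∧ TopologicalSpace.SeparableSpace Y ∧
      ∃ f : X → Y, Continuous f ∧
        ∃ (ι₀ : ℕ → X) (ι'₀ : ℕ → Y) (ι₁ : ℕ → X) (ι'₁ : ℕ → Y),
          DenseIsomCodeTo d₀ ι₀ ∧ DenseIsomCodeTo d'₀ ι'₀ ∧
          DenseIsomCodeTo d₁ ι₁ ∧ DenseIsomCodeTo d'₁ ι'₁ ∧
          f ∘ ι₀ = ι'₀ ∘ g₀ ∧ f ∘ ι₁ = ι'₁ ∘ g₁)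
    ↔ (∃ (d d' : ℕ × ℕ → ℝ), IsMetricOnNat d ∧ IsMetricOnNat d' ∧
        ∃ g : ℕ → ℕ, CauchyContCode d d' g ∧
          ∃ (i₀ i'₀ i₁ i'₁ : ℕ → ℕ),
            DenseIsomCode d₀ d i₀ ∧ DenseIsomCode d'₀ d' i'₀ ∧
            DenseIsomCode d₁ d i₁ ∧ DenseIsomCode d'₁ d' i'₁ ∧
            i'₀ ∘ g₀ = g ∘ i₀ ∧ i'₁ ∘ g₁ = g ∘ i₁) := by
  constructor
  · -- (1) → (2)
    rintro ⟨X, Y, mX, mY, h⟩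
    obtain ⟨hXc, hXs, hYc, hYs, f, hfc, ι₀, ι'₀, ι₁, ι'₁, hι₀, hι'₀, hι₁, hι'₁, hcm₀, hcm₁⟩ := h
    have hι₀inj : Function.Injective ι₀ := by
      intro a b hab
      have h1 := hι₀.1 a b
      rw [hab, dist_self] at h1
      exact (hd₀.1 a b).1 h1.symm
    have hι'₀inj : Function.Injective ι'₀ := by
      intro a b hab
      have h1 := hι'₀.1 a b
      rw [hab, dist_self] at h1
      exact (hd'₀.1 a b).1 h1.symm
    set S : Set X := Set.range ι₀ ∪ Set.range ι₁ with hS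
    have hScount : S.Countable := (Set.countable_range ι₀).union (Set.countable_range ι₁)
    have hSinf : S.Infinite :=
      Set.infinite_of_injective_forall_mem hι₀inj (fun a => Or.inl ⟨a, rfl⟩)
    haveI := hScount.to_subtype
    haveI := hSinf.to_subtype
    obtain ⟨dS⟩ := nonempty_denumerable (↥S)
    let eS : ℕ ≃ ↥S := (Denumerable.eqv (↥S)).symm
    let e : ℕ → X := fun n => ((eS n : ↥S) : X)
    have heinj : Function.Injective e := fun a b hab => eS.injective (Subtype.ext hab)
    set T : Set Y := (Set.range ι'₀ ∪ Set.range ι'₁) ∪ f '' S with hT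
    have hTcount : T.Countable :=
      (((Set.countable_range ι'₀).union (Set.countable_range ι'₁))).union
        (hScount.image f)
    have hTinf : T.Infinite :=
      Set.infinite_of_injective_forall_mem hι'₀inj (fun a => Or.inl (Or.inl ⟨a, rfl⟩))
    haveI := hTcount.to_subtype
    haveI := hTinf.to_subtype
    obtain ⟨dT⟩ := nonempty_denumerable (↥T)
    let eT : ℕ ≃ ↥T := (Denumerable.eqv (↥T)).symm
    let e' : ℕ → Y := fun n => ((eT n : ↥T) : Y)
    have he'inj : Function.Injective e' := fun a b hab => eT.injective (Subtype.ext hab)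
    refine ⟨fun p => dist (e p.1) (e p.2), fun p => dist (e' p.1) (e' p.2), ?_, ?_, ?_⟩
    · exact ⟨fun m n => ⟨fun h0 => heinj (dist_eq_zero.mp h0),
        fun h0 => by rw [h0]; exact dist_self _⟩,
        fun m n => dist_comm _ _, fun m n k => dist_triangle _ _ _⟩
    · exact ⟨fun m n => ⟨fun h0 => he'inj (dist_eq_zero.mp h0),
        fun h0 => by rw [h0]; exact dist_self _⟩,
        fun m n => dist_comm _ _, fun m n k => dist_triangle _ _ _⟩
    have hmem : ∀ n, f (e n) ∈ T := fun n => Or.inr ⟨e n, (eS n).2, rfl⟩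
    refine ⟨fun n => eT.symm ⟨f (e n), hmem n⟩, ?_, ?_⟩
    · -- Cauchy-continuity of g
      intro x hx ε hε
      have hexc : CauchySeq (fun n => e (x n)) := by
        rw [Metric.cauchySeq_iff]
        intro δ hδ
        exact hx δ hδ
      obtain ⟨p, hp⟩ := cauchySeq_tendsto_of_complete hexc
      have hfp : Tendsto (fun n => f (e (x n))) atTop (𝓝 (f p)) := (hfc.tendsto p).comp hp
      obtain ⟨N, hN⟩ := Metric.cauchySeq_iff.mp hfp.cauchySeq ε hε
      refine ⟨N, fun m hm n hn => ?_⟩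
      show dist (e' (eT.symm ⟨f (e (x m)), _⟩)) (e' (eT.symm ⟨f (e (x n)), _⟩)) < ε
      have h1 : ∀ k, e' (eT.symm ⟨f (e k), hmem k⟩) = f (e k) := fun k => by
        show ((eT (eT.symm ⟨f (e k), hmem k⟩) : ↥T) : Y) = _
        rw [eT.apply_symm_apply]
      rw [h1, h1]
      exact hN m hm n hn
    · -- the four dense isometries
      have hmem₀ : ∀ m, ι₀ m ∈ S := fun m => Or.inl ⟨m, rfl⟩
      have hmem₁ : ∀ m, ι₁ m ∈ S := fun m => Or.inr ⟨m, rfl⟩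
      have hmem'₀ : ∀ m, ι'₀ m ∈ T := fun m => Or.inl (Or.inl ⟨m, rfl⟩)
      have hmem'₁ : ∀ m, ι'₁ m ∈ T := fun m => Or.inl (Or.inr ⟨m, rfl⟩)
      have heS : ∀ (z : X) (hz : z ∈ S), e (eS.symm ⟨z, hz⟩) = z := fun z hz => by
        show ((eS (eS.symm ⟨z, hz⟩) : ↥S) : X) = z
        rw [eS.apply_symm_apply]
      have heT : ∀ (z : Y) (hz : z ∈ T), e' (eT.symm ⟨z, hz⟩) = z := fun z hz => by
        show ((eT (eT.symm ⟨z, hz⟩) : ↥T) : Y) = z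
        rw [eT.apply_symm_apply]
      refine ⟨fun m => eS.symm ⟨ι₀ m, hmem₀ m⟩, fun m => eT.symm ⟨ι'₀ m, hmem'₀ m⟩,
        fun m => eS.symm ⟨ι₁ m, hmem₁ m⟩, fun m => eT.symm ⟨ι'₁ m, hmem'₁ m⟩,
        ⟨?_, ?_⟩, ⟨?_, ?_⟩, ⟨?_, ?_⟩, ⟨?_, ?_⟩, ?_, ?_⟩
      · intro m n; show dist (e _) (e _) = _; rw [heS, heS]; exact hι₀.1 m n
      · intro n ε hε
        obtain ⟨m, hm⟩ := Metric.denseRange_iff.mp hι₀.2 (e n) ε hε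
        exact ⟨m, by show dist (e n) (e _) < ε; rw [heS]; exact hm⟩
      · intro m n; show dist (e' _) (e' _) = _; rw [heT, heT]; exact hι'₀.1 m n
      · intro n ε hε
        obtain ⟨m, hm⟩ := Metric.denseRange_iff.mp hι'₀.2 (e' n) ε hε
        exact ⟨m, by show dist (e' n) (e' _) < ε; rw [heT]; exact hm⟩
      · intro m n; show dist (e _) (e _) = _; rw [heS, heS]; exact hι₁.1 m n
      · intro n ε hε
        obtain ⟨m, hm⟩ := Metric.denseRange_iff.mp hι₁.2 (e n) ε hε
        exact ⟨m, by show dist (e n) (e _) < ε; rw [heS]; exact hm⟩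
      · intro m n; show dist (e' _) (e' _) = _; rw [heT, heT]; exact hι'₁.1 m n
      · intro n ε hε
        obtain ⟨m, hm⟩ := Metric.denseRange_iff.mp hι'₁.2 (e' n) ε hε
        exact ⟨m, by show dist (e' n) (e' _) < ε; rw [heT]; exact hm⟩
      · funext m
        show eT.symm ⟨ι'₀ (g₀ m), _⟩ = eT.symm ⟨f (e (eS.symm ⟨ι₀ m, hmem₀ m⟩)), _⟩
        apply congrArg eT.symm
        apply Subtype.ext
        show ι'₀ (g₀ m) = f (e (eS.symm ⟨ι₀ m, hmem₀ m⟩))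
        rw [heS]
        exact (congrFun hcm₀ m).symm
      · funext m
        show eT.symm ⟨ι'₁ (g₁ m), _⟩ = eT.symm ⟨f (e (eS.symm ⟨ι₁ m, hmem₁ m⟩)), _⟩
        apply congrArg eT.symm
        apply Subtype.ext
        show ι'₁ (g₁ m) = f (e (eS.symm ⟨ι₁ m, hmem₁ m⟩))
        rw [heS]
        exact (congrFun hcm₁ m).symm
  · -- (2) → (1)
    rintro ⟨d, d', hd, hd', g, hgcc, i₀, i'₀, i₁, i'₁, hi₀, hi'₀, hi₁, hi'₁, hc₀, hc₁⟩
    letI mM : MetricSpace (Pt d) := metOf d hd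
    letI mM' : MetricSpace (Pt d') := metOf d' hd'
    -- the map induced by `g`
    let gM : Pt d → Completion (Pt d') := fun m => ((Pt.mk d' (g (Pt.toNat m)) : Pt d') :
      Completion (Pt d'))
    have hisom' : ∀ a b : Pt d', dist ((a : Completion (Pt d'))) ((b : Completion (Pt d')))
        = dist a b := fun a b => Completion.dist_eq a b
    have hgM : ∀ u : ℕ → Pt d, CauchySeq u → CauchySeq (gM ∘ u) := by
      intro u hu
      have hcode : CauchySeqCode d (fun n => Pt.toNat (u n)) := by
        intro ε hε
        obtain ⟨N, hN⟩ := Metric.cauchySeq_iff.mp hu ε hε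
        exact ⟨N, fun m hm n hn => hN m hm n hn⟩
      have hcode' := hgcc _ hcode
      have hv : CauchySeq (fun n => (Pt.mk d' (g (Pt.toNat (u n))) : Pt d')) := by
        rw [Metric.cauchySeq_iff]
        intro ε hε
        obtain ⟨N, hN⟩ := hcode' ε hε
        exact ⟨N, fun m hm n hn => hN m hm n hn⟩
      exact cauchySeq_comp_of_dist_eq hisom' hv
    obtain ⟨f, hfc, hfe⟩ := extend_cc gM hgM
    refine ⟨Completion (Pt d), Completion (Pt d'), inferInstance, inferInstance,
      inferInstance, ?_, inferInstance, ?_, f, hfc, ?_⟩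
    · exact (Completion.denseRange_coe (α := Pt d)).separableSpace (Completion.continuous_coe _)
    · exact (Completion.denseRange_coe (α := Pt d')).separableSpace (Completion.continuous_coe _)
    -- the embeddings
    have hembX : ∀ (dc : ℕ × ℕ → ℝ) (i : ℕ → ℕ), DenseIsomCode dc d i →
        DenseIsomCodeTo dc (fun m => ((Pt.mk d (i m) : Pt d) : Completion (Pt d))) := by
      intro dc i hi
      constructor
      · intro m n
        rw [Completion.dist_eq]
        exact hi.1 m n
      · rw [Metric.denseRange_iff]
        intro x ε hε
        obtain ⟨a, ha⟩ := Metric.denseRange_iff.mp (Completion.denseRange_coe (α := Pt d))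
          x (ε / 2) (by linarith)
        obtain ⟨m, hm⟩ := hi.2 (Pt.toNat a) (ε / 2) (by linarith)
        refine ⟨m, lt_of_le_of_lt (dist_triangle x ((a : Completion (Pt d))) _) ?_⟩
        rw [Completion.dist_eq]
        have hda : dist a (Pt.mk d (i m)) = d (Pt.toNat a, i m) := rfl
        rw [hda]
        linarith
    have hembY : ∀ (dc : ℕ × ℕ → ℝ) (i : ℕ → ℕ), DenseIsomCode dc d' i →
        DenseIsomCodeTo dc (fun m => ((Pt.mk d' (i m) : Pt d') : Completion (Pt d'))) := by
      intro dc i hi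
      constructor
      · intro m n
        rw [Completion.dist_eq]
        exact hi.1 m n
      · rw [Metric.denseRange_iff]
        intro x ε hε
        obtain ⟨a, ha⟩ := Metric.denseRange_iff.mp (Completion.denseRange_coe (α := Pt d'))
          x (ε / 2) (by linarith)
        obtain ⟨m, hm⟩ := hi.2 (Pt.toNat a) (ε / 2) (by linarith)
        refine ⟨m, lt_of_le_of_lt (dist_triangle x ((a : Completion (Pt d'))) _) ?_⟩
        rw [Completion.dist_eq]
        have hda : dist a (Pt.mk d' (i m)) = d' (Pt.toNat a, i m) := rfl
        rw [hda]
        linarith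
    refine ⟨fun m => ((Pt.mk d (i₀ m) : Pt d) : Completion (Pt d)),
      fun m => ((Pt.mk d' (i'₀ m) : Pt d') : Completion (Pt d')),
      fun m => ((Pt.mk d (i₁ m) : Pt d) : Completion (Pt d)),
      fun m => ((Pt.mk d' (i'₁ m) : Pt d') : Completion (Pt d')),
      hembX d₀ i₀ hi₀, hembY d'₀ i'₀ hi'₀, hembX d₁ i₁ hi₁, hembY d'₁ i'₁ hi'₁, ?_, ?_⟩
    · funext m
      simp only [Function.comp_apply]
      rw [hfe]
      exact congrArg (fun k => ((Pt.mk d' k : Pt d') : Completion (Pt d')))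
        (congrFun hc₀ m).symm
    · funext m
      simp only [Function.comp_apply]
      rw [hfe]
      exact congrArg (fun k => ((Pt.mk d' k : Pt d') : Completion (Pt d')))
        (congrFun hc₁ m).symm
end

section
/- Let d₀ and d₁ be metrics on ℕ. Then the completions of ⟨ℕ,d₀⟩ and ⟨ℕ,d₁⟩ are homeomorphic if and only if there exist metrics d'₀ and d'₁ on ℕ such that, for each e = 0,1, there is a dense isometry from ⟨ℕ,d_e⟩ to ⟨ℕ,d'_e⟩, and there is a bijection g : ⟨ℕ,d'₀⟩ → ⟨ℕ,d'₁⟩ such that both g and g⁻¹ are Cauchy-continuous. -/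
/-- `ι : ℕ → X` makes the complete metric space `X` a completion of the code `⟨ℕ,d⟩`:
`ι` is distance-preserving with dense range. -/
def CodesCompletion (d : ℕ × ℕ → ℝ) {X : Type} [MetricSpace X] (ι : ℕ → X) : Prop :=
  (∀ m n : ℕ, dist (ι m) (ι n) = d (m, n)) ∧ DenseRange ι

open Filter Topology

/-- code-Cauchy iff metric-Cauchy through a distance-preserving map. -/
lemma cauchyCode_iff {d : ℕ × ℕ → ℝ} {X : Type} [MetricSpace X] {ι : ℕ → X}
    (hd : ∀ m n : ℕ, dist (ι m) (ι n) = d (m, n)) (x : ℕ → ℕ) :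
    CauchySeqCode d x ↔ CauchySeq (ι ∘ x) := by
  rw [Metric.cauchySeq_iff]
  constructor
  · intro h ε hε
    obtain ⟨N, hN⟩ := h ε hε
    exact ⟨N, fun m hm n hn => by simpa [Function.comp, hd] using hN m hm n hn⟩
  · intro h ε hε
    obtain ⟨N, hN⟩ := h ε hε
    exact ⟨N, fun m hm n hn => by simpa [Function.comp, hd] using hN m hm n hn⟩

lemma one_div_succ_pos (k : ℕ) : (0:ℝ) < 1 / (k + 1) := by positivity

lemma tendsto_one_div_succ : Tendsto (fun k : ℕ => (1:ℝ) / (k + 1)) atTop (𝓝 0) :=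
  tendsto_one_div_add_atTop_nhds_zero_nat


/-- Lemma A: if X completes d and there's a dense isometry d → d', then X completes d'. -/
lemma completes_of_denseIsom {d d' : ℕ × ℕ → ℝ} (hd' : IsMetricOnNat d')
    {X : Type} [MetricSpace X] [CompleteSpace X] {ι : ℕ → X} (hι : CodesCompletion d ι)
    {i : ℕ → ℕ} (hi : DenseIsomCode d d' i) :
    ∃ ι' : ℕ → X, CodesCompletion d' ι' ∧ ∀ n, ι' (i n) = ι n := by
  obtain ⟨hdist, hdense⟩ := hι
  obtain ⟨hiso, hden⟩ := hi
  -- approximating sequences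
  have sel : ∀ n : ℕ, ∀ k : ℕ, ∃ m : ℕ, d' (n, i m) < 1 / (k + 1) :=
    fun n k => hden n _ (one_div_succ_pos k)
  choose s hs using sel
  -- each ι ∘ (s n) is Cauchy
  have hc : ∀ n, CauchySeq (fun k => ι (s n k)) := by
    intro n
    rw [Metric.cauchySeq_iff]
    intro ε hε
    obtain ⟨N, hN⟩ := exists_nat_one_div_lt (half_pos hε)
    refine ⟨N, fun a ha b hb => ?_⟩
    have h1 : d' (i (s n a), i (s n b)) ≤ d' (i (s n a), n) + d' (n, i (s n b)) := hd'.2.2 _ _ _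
    have h2 : d' (i (s n a), n) = d' (n, i (s n a)) := hd'.2.1 _ _
    have h3 : (1:ℝ) / (a+1) ≤ 1 / (N+1) := by
      apply one_div_le_one_div_of_le (by positivity)
      exact_mod_cast Nat.succ_le_succ ha
    have h4 : (1:ℝ) / (b+1) ≤ 1 / (N+1) := by
      apply one_div_le_one_div_of_le (by positivity)
      exact_mod_cast Nat.succ_le_succ hb
    calc dist (ι (s n a)) (ι (s n b)) = d (s n a, s n b) := hdist _ _
      _ = d' (i (s n a), i (s n b)) := (hiso _ _).symm
      _ ≤ d' (i (s n a), n) + d' (n, i (s n b)) := h1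
      _ < 1/(a+1) + 1/(b+1) := by rw [h2]; exact add_lt_add (hs n a) (hs n b)
      _ ≤ 1/(N+1) + 1/(N+1) := add_le_add h3 h4
      _ < ε/2 + ε/2 := by linarith [hN]
      _ = ε := by ring
  have hlim : ∀ n, ∃ p : X, Tendsto (fun k => ι (s n k)) atTop (𝓝 p) :=
    fun n => cauchySeq_tendsto_of_complete (hc n)
  choose ι' hι' using hlim
  -- the d'-distance is realized
  have key : ∀ a b, dist (ι' a) (ι' b) = d' (a, b) := by
    intro a b
    have t1 : Tendsto (fun k => dist (ι (s a k)) (ι (s b k))) atTop (𝓝 (dist (ι' a) (ι' b))) :=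
      (hι' a).dist (hι' b)
    have t2 : Tendsto (fun k => dist (ι (s a k)) (ι (s b k))) atTop (𝓝 (d' (a, b))) := by
      rw [Metric.tendsto_atTop]
      intro ε hε
      obtain ⟨N, hN⟩ := exists_nat_one_div_lt (half_pos hε)
      refine ⟨N, fun k hk => ?_⟩
      have hkb : (1:ℝ)/(k+1) ≤ 1/(N+1) := by
        apply one_div_le_one_div_of_le (by positivity)
        exact_mod_cast Nat.succ_le_succ hk
      have e1 : dist (ι (s a k)) (ι (s b k)) = d' (i (s a k), i (s b k)) := by
        rw [hdist]; exact (hiso _ _).symm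
      have tri1 : d' (i (s a k), i (s b k)) ≤ d' (i (s a k), a) + (d' (a, b) + d' (b, i (s b k))) :=
        le_trans (hd'.2.2 _ a _) (by
          have := hd'.2.2 a b (i (s b k))
          linarith)
      have tri2 : d' (a, b) ≤ d' (a, i (s a k)) + (d' (i (s a k), i (s b k)) + d' (i (s b k), b)) :=
        le_trans (hd'.2.2 a (i (s a k)) b) (by
          have := hd'.2.2 (i (s a k)) (i (s b k)) b
          linarith)
      have sym1 : d' (i (s a k), a) = d' (a, i (s a k)) := hd'.2.1 _ _
      have sym2 : d' (i (s b k), b) = d' (b, i (s b k)) := hd'.2.1 _ _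
      have ha' := hs a k
      have hb' := hs b k
      rw [Real.dist_eq, abs_sub_lt_iff, e1]
      constructor <;> [skip; skip] <;> nlinarith [hkb, hN]
    exact tendsto_nhds_unique t1 t2
  have hcomp : ∀ n, ι' (i n) = ι n := by
    intro n
    have t1 : Tendsto (fun k => ι (s (i n) k)) atTop (𝓝 (ι n)) := by
      rw [Metric.tendsto_atTop]
      intro ε hε
      obtain ⟨N, hN⟩ := exists_nat_one_div_lt hε
      refine ⟨N, fun k hk => ?_⟩
      have hkb : (1:ℝ)/(k+1) ≤ 1/(N+1) := by
        apply one_div_le_one_div_of_le (by positivity)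
        exact_mod_cast Nat.succ_le_succ hk
      have : dist (ι (s (i n) k)) (ι n) = d' (i (s (i n) k), i n) := by
        rw [hdist]; exact (hiso _ _).symm
      rw [this, hd'.2.1]
      calc d' (i n, i (s (i n) k)) < 1/(k+1) := hs (i n) k
        _ ≤ 1/(N+1) := hkb
        _ < ε := hN
    exact tendsto_nhds_unique (hι' (i n)) t1
  refine ⟨ι', ⟨key, ?_⟩, hcomp⟩
  have : Set.range ι ⊆ Set.range ι' := by
    rintro _ ⟨n, rfl⟩
    exact ⟨i n, hcomp n⟩
  exact hdense.mono this


lemma tendsto_of_dist_lt_one_div {Y : Type} [MetricSpace Y] {f : ℕ → Y} {p : Y}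
    (h : ∀ k, dist (f k) p < 1 / (k + 1)) : Tendsto f atTop (𝓝 p) := by
  rw [tendsto_iff_dist_tendsto_zero]
  apply squeeze_zero (fun k => dist_nonneg) (fun k => le_of_lt (h k)) tendsto_one_div_succ

/-- Lemma B core: extension of a Cauchy-continuous code map to completions. -/
lemma exists_extension {d'₀ d'₁ : ℕ × ℕ → ℝ}
    {X Y : Type} [MetricSpace X] [MetricSpace Y] [CompleteSpace Y]
    {ι : ℕ → X} (hι : CodesCompletion d'₀ ι) {κ : ℕ → Y} (hκ : CodesCompletion d'₁ κ)
    {g : ℕ → ℕ} (hg : CauchyContCode d'₀ d'₁ g) :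
    ∃ φ : X → Y, Continuous φ ∧ ∀ n, φ (ι n) = κ (g n) := by
  have sel : ∀ p : X, ∀ k : ℕ, ∃ m : ℕ, dist p (ι m) < 1 / (k + 1) := by
    intro p k
    exact Metric.denseRange_iff.mp hι.2 p _ (one_div_succ_pos k)
  choose xs hxs using sel
  -- Cauchy from convergence
  have cauchy_of_tendsto : ∀ (x : ℕ → ℕ) (p : X),
      Tendsto (fun k => ι (x k)) atTop (𝓝 p) → CauchySeqCode d'₀ x := by
    intro x p hx
    exact (cauchyCode_iff hι.1 x).mpr hx.cauchySeq
  have hxt : ∀ p : X, Tendsto (fun k => ι (xs p k)) atTop (𝓝 p) := by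
    intro p
    exact tendsto_of_dist_lt_one_div (fun k => by rw [dist_comm]; exact hxs p k)
  -- image sequences converge
  have himg : ∀ (x : ℕ → ℕ) (p : X), Tendsto (fun k => ι (x k)) atTop (𝓝 p) →
      ∃ q : Y, Tendsto (fun k => κ (g (x k))) atTop (𝓝 q) := by
    intro x p hx
    have := hg x (cauchy_of_tendsto x p hx)
    have : CauchySeq (fun k => κ (g (x k))) := (cauchyCode_iff hκ.1 (g ∘ x)).mp this
    exact cauchySeq_tendsto_of_complete this
  have hφ0 : ∀ p : X, ∃ q : Y, Tendsto (fun k => κ (g (xs p k))) atTop (𝓝 q) :=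
    fun p => himg (xs p) p (hxt p)
  choose φ hφ using hφ0
  -- key: any sequence converging to p has image converging to φ p
  have L : ∀ (x : ℕ → ℕ) (p : X), Tendsto (fun k => ι (x k)) atTop (𝓝 p) →
      Tendsto (fun k => κ (g (x k))) atTop (𝓝 (φ p)) := by
    intro x p hx
    set z : ℕ → ℕ := fun k => if k % 2 = 0 then x (k / 2) else xs p (k / 2) with hz
    have t2 : Tendsto (fun k : ℕ => 2 * k) atTop atTop :=
      tendsto_atTop_atTop_of_monotone (fun a b h => by omega) (fun b => ⟨b, by omega⟩)
    have t2' : Tendsto (fun k : ℕ => 2 * k + 1) atTop atTop :=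
      tendsto_atTop_atTop_of_monotone (fun a b h => by omega) (fun b => ⟨b, by omega⟩)
    have hzt : Tendsto (fun k => ι (z k)) atTop (𝓝 p) := by
      rw [Metric.tendsto_atTop]
      intro ε hε
      obtain ⟨N₁, hN₁⟩ := (Metric.tendsto_atTop.mp hx) ε hε
      obtain ⟨N₂, hN₂⟩ := (Metric.tendsto_atTop.mp (hxt p)) ε hε
      refine ⟨2 * (max N₁ N₂) + 2, fun k hk => ?_⟩
      by_cases h2 : k % 2 = 0
      · simp only [hz, h2, if_pos]
        exact hN₁ _ (by omega)
      · simp only [hz, h2, if_neg, if_false]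
        exact hN₂ _ (by omega)
    obtain ⟨q, hq⟩ := himg z p hzt
    have hodd : Tendsto (fun k => κ (g (z (2 * k + 1)))) atTop (𝓝 q) :=
      hq.comp t2'
    have hodd' : (fun k => κ (g (z (2 * k + 1)))) = fun k => κ (g (xs p k)) := by
      funext k
      have e1 : (2 * k + 1) % 2 ≠ 0 := by omega
      have e2 : (2 * k + 1) / 2 = k := by omega
      simp [hz, e1, e2]
    have hqφ : q = φ p := tendsto_nhds_unique (hodd'.symm ▸ hφ p) hodd |>.symm
    have heven : Tendsto (fun k => κ (g (z (2 * k)))) atTop (𝓝 q) := hq.comp t2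
    have heven' : (fun k => κ (g (z (2 * k)))) = fun k => κ (g (x k)) := by
      funext k
      have e1 : (2 * k) % 2 = 0 := by omega
      have e2 : (2 * k) / 2 = k := by omega
      simp [hz, e1, e2]
    rw [hqφ] at heven
    rwa [heven'] at heven
  have hφι : ∀ n, φ (ι n) = κ (g n) := by
    intro n
    have := L (fun _ => n) (ι n) tendsto_const_nhds
    exact tendsto_nhds_unique this tendsto_const_nhds
  refine ⟨φ, ?_, hφι⟩
  rw [continuous_iff_seqContinuous]
  intro p P hp
  -- choose good indices
  have sel2 : ∀ j : ℕ, ∃ m : ℕ, dist (ι m) (p j) < 1 / (j + 1) ∧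
      dist (κ (g m)) (φ (p j)) < 1 / (j + 1) := by
    intro j
    have h1 := Metric.tendsto_atTop.mp (hxt (p j)) _ (one_div_succ_pos j)
    have h2 := Metric.tendsto_atTop.mp (hφ (p j)) _ (one_div_succ_pos j)
    obtain ⟨N₁, hN₁⟩ := h1
    obtain ⟨N₂, hN₂⟩ := h2
    exact ⟨xs (p j) (max N₁ N₂), hN₁ _ (le_max_left _ _), hN₂ _ (le_max_right _ _)⟩
  choose y hy1 hy2 using sel2
  have hyt : Tendsto (fun j => ι (y j)) atTop (𝓝 P) := by
    rw [tendsto_iff_dist_tendsto_zero]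
    apply squeeze_zero (fun j => dist_nonneg)
      (fun j => (dist_triangle (ι (y j)) (p j) P).trans
        (add_le_add (le_of_lt (hy1 j)) le_rfl))
    have hd : Tendsto (fun j => dist (p j) P) atTop (𝓝 0) :=
      tendsto_iff_dist_tendsto_zero.mp hp
    simpa using tendsto_one_div_succ.add hd
  have hyim := L y P hyt
  rw [tendsto_iff_dist_tendsto_zero]
  apply squeeze_zero (fun j => dist_nonneg)
    (fun j => (dist_triangle (φ (p j)) (κ (g (y j))) (φ P)).trans
      (add_le_add (le_of_lt ((dist_comm (φ (p j)) (κ (g (y j)))) ▸ hy2 j)) le_rfl))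
  have hd : Tendsto (fun j => dist (κ (g (y j))) (φ P)) atTop (𝓝 0) :=
    tendsto_iff_dist_tendsto_zero.mp hyim
  simpa using tendsto_one_div_succ.add hd


lemma homeo_of_codes {d'₀ d'₁ : ℕ × ℕ → ℝ}
    {X Y : Type} [MetricSpace X] [CompleteSpace X] [MetricSpace Y] [CompleteSpace Y]
    {ι : ℕ → X} (hι : CodesCompletion d'₀ ι) {κ : ℕ → Y} (hκ : CodesCompletion d'₁ κ)
    {g g' : ℕ → ℕ} (hgg' : g' ∘ g = id) (hg'g : g ∘ g' = id)
    (hg : CauchyContCode d'₀ d'₁ g) (hg' : CauchyContCode d'₁ d'₀ g') :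
    Nonempty (X ≃ₜ Y) := by
  obtain ⟨φ, hφc, hφ⟩ := exists_extension hι hκ hg
  obtain ⟨ψ, hψc, hψ⟩ := exists_extension hκ hι hg'
  have left : ψ ∘ φ = id := by
    apply Continuous.ext_on (hι.2 : Dense (Set.range ι)) (hψc.comp hφc) continuous_id
    rintro _ ⟨n, rfl⟩
    simp only [Function.comp_apply, id_eq, hφ, hψ]
    exact congrArg ι (congrFun hgg' n)
  have right : φ ∘ ψ = id := by
    apply Continuous.ext_on (hκ.2 : Dense (Set.range κ)) (hφc.comp hψc) continuous_id
    rintro _ ⟨n, rfl⟩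
    simp only [Function.comp_apply, id_eq, hφ, hψ]
    exact congrArg κ (congrFun hg'g n)
  exact ⟨⟨⟨φ, ψ, fun x => congrFun left x, fun y => congrFun right y⟩, hφc, hψc⟩⟩


def NatM (_d : ℕ × ℕ → ℝ) : Type := ℕ

noncomputable def metricOf (d : ℕ × ℕ → ℝ) (h : IsMetricOnNat d) : MetricSpace (NatM d) :=
  { dist := fun m n => d (m, n)
    dist_self := fun n => (h.1 n n).mpr rfl
    dist_comm := fun m n => h.2.1 m n
    dist_triangle := fun m n k => h.2.2 m n k
    eq_of_dist_eq_zero := fun h' => (h.1 _ _).mp h'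
    edist_dist := fun x y => rfl }



lemma forward_construction {X₀ X₁ : Type}
    [MetricSpace X₀] [CompleteSpace X₀] [MetricSpace X₁] [CompleteSpace X₁]
    (d₀ d₁ : ℕ × ℕ → ℝ)
    {ι₀ : ℕ → X₀} (hι₀ : CodesCompletion d₀ ι₀) {ι₁ : ℕ → X₁} (hι₁ : CodesCompletion d₁ ι₁)
    (h : X₀ ≃ₜ X₁) (hd₀ : IsMetricOnNat d₀) :
    ∃ d'₀ d'₁ : ℕ × ℕ → ℝ, IsMetricOnNat d'₀ ∧ IsMetricOnNat d'₁ ∧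
      (∃ i₀ : ℕ → ℕ, DenseIsomCode d₀ d'₀ i₀) ∧
      (∃ i₁ : ℕ → ℕ, DenseIsomCode d₁ d'₁ i₁) ∧
      (∃ g g' : ℕ → ℕ, g' ∘ g = id ∧ g ∘ g' = id ∧
        CauchyContCode d'₀ d'₁ g ∧ CauchyContCode d'₁ d'₀ g') := by
  classical
  set S : Set X₀ := Set.range ι₀ ∪ Set.range (fun n => h.symm (ι₁ n)) with hS
  have hcount : S.Countable := (Set.countable_range _).union (Set.countable_range _)
  have hι₀inj : Function.Injective ι₀ := by
    intro m n hmn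
    have : d₀ (m, n) = 0 := by rw [← hι₀.1, hmn, dist_self]
    exact (hd₀.1 m n).mp this
  have hinf : S.Infinite := by
    apply Set.infinite_of_injective_forall_mem (f := ι₀) hι₀inj
    intro n; exact Or.inl ⟨n, rfl⟩
  haveI : Countable ↥S := hcount.to_subtype
  haveI : Infinite ↥S := hinf.to_subtype
  obtain ⟨den⟩ : Nonempty (Denumerable ↥S) := nonempty_denumerable ↥S
  let e : ℕ ≃ ↥S := (den.eqv ↥S).symm
  let e₀ : ℕ → X₀ := fun n => (e n : X₀)
  have he₀inj : Function.Injective e₀ := fun a b hab =>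
    e.injective (Subtype.ext hab)
  refine ⟨fun p => dist (e₀ p.1) (e₀ p.2), fun p => dist (h (e₀ p.1)) (h (e₀ p.2)),
    ⟨?_, fun m n => dist_comm _ _, fun m n k => dist_triangle _ _ _⟩,
    ⟨?_, fun m n => dist_comm _ _, fun m n k => dist_triangle _ _ _⟩, ?_, ?_, ?_⟩
  · intro m n
    rw [dist_eq_zero]
    exact ⟨fun hh => he₀inj hh, fun hh => by rw [hh]⟩
  · intro m n
    rw [dist_eq_zero]
    exact ⟨fun hh => he₀inj (h.injective hh), fun hh => by rw [hh]⟩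
  · -- dense isometry i₀
    refine ⟨fun n => e.symm ⟨ι₀ n, Or.inl ⟨n, rfl⟩⟩, ?_, ?_⟩
    · intro m n
      show dist (e₀ _) (e₀ _) = _
      simp only [e₀, Equiv.apply_symm_apply]
      exact hι₀.1 m n
    · intro n ε hε
      obtain ⟨m, hm⟩ := Metric.denseRange_iff.mp hι₀.2 (e₀ n) ε hε
      refine ⟨m, ?_⟩
      show dist (e₀ n) (e₀ _) < ε
      simp only [e₀, Equiv.apply_symm_apply]
      exact hm
  · -- dense isometry i₁
    refine ⟨fun n => e.symm ⟨h.symm (ι₁ n), Or.inr ⟨n, rfl⟩⟩, ?_, ?_⟩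
    · intro m n
      show dist (h (e₀ _)) (h (e₀ _)) = _
      simp only [e₀, Equiv.apply_symm_apply, Homeomorph.apply_symm_apply]
      exact hι₁.1 m n
    · intro n ε hε
      obtain ⟨m, hm⟩ := Metric.denseRange_iff.mp hι₁.2 (h (e₀ n)) ε hε
      refine ⟨m, ?_⟩
      show dist (h (e₀ n)) (h (e₀ _)) < ε
      simp only [e₀, Equiv.apply_symm_apply, Homeomorph.apply_symm_apply]
      exact hm
  · -- g = id
    refine ⟨id, id, rfl, rfl, ?_, ?_⟩
    · intro x hx
      have hc : CauchySeq (e₀ ∘ x) := (cauchyCode_iff (fun m n => rfl) x).mp hx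
      obtain ⟨p, hp⟩ := cauchySeq_tendsto_of_complete hc
      have : Tendsto ((fun n => h (e₀ n)) ∘ x) atTop (𝓝 (h p)) :=
        (h.continuous.tendsto p).comp hp
      exact (cauchyCode_iff (ι := fun n => h (e₀ n)) (fun m n => rfl) (id ∘ x)).mpr
        this.cauchySeq
    · intro x hx
      have hc : CauchySeq ((fun n => h (e₀ n)) ∘ x) :=
        (cauchyCode_iff (ι := fun n => h (e₀ n)) (fun m n => rfl) x).mp hx
      obtain ⟨q, hq⟩ := cauchySeq_tendsto_of_complete hc
      have : Tendsto (e₀ ∘ x) atTop (𝓝 (h.symm q)) := by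
        have h2 := (h.symm.continuous.tendsto q).comp hq
        have h3 : ⇑h.symm ∘ (fun n => h (e₀ n)) ∘ x = e₀ ∘ x := by
          funext k; simp
        rwa [h3] at h2
      exact (cauchyCode_iff (fun m n => rfl) (id ∘ x)).mpr this.cauchySeq

/-- the completions of `⟨ℕ,d₀⟩` and `⟨ℕ,d₁⟩` are homeomorphic iff there are
metrics `d'₀, d'₁` on `ℕ` with dense isometries `⟨ℕ,d_e⟩ → ⟨ℕ,d'_e⟩` and a bijection
`g : ⟨ℕ,d'₀⟩ → ⟨ℕ,d'₁⟩` such that both `g` and its inverse are Cauchy-continuous. -/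
theorem completions_homeomorphic_iff
    (d₀ d₁ : ℕ × ℕ → ℝ) (h₀ : IsMetricOnNat d₀) (h₁ : IsMetricOnNat d₁) :
    (∀ (X₀ : Type) [MetricSpace X₀] [CompleteSpace X₀] (ι₀ : ℕ → X₀),
      CodesCompletion d₀ ι₀ →
      ∀ (X₁ : Type) [MetricSpace X₁] [CompleteSpace X₁] (ι₁ : ℕ → X₁),
        CodesCompletion d₁ ι₁ → Nonempty (X₀ ≃ₜ X₁))
    ↔ (∃ d'₀ d'₁ : ℕ × ℕ → ℝ, IsMetricOnNat d'₀ ∧ IsMetricOnNat d'₁ ∧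
        (∃ i₀ : ℕ → ℕ, DenseIsomCode d₀ d'₀ i₀) ∧
        (∃ i₁ : ℕ → ℕ, DenseIsomCode d₁ d'₁ i₁) ∧
        (∃ g g' : ℕ → ℕ, g' ∘ g = id ∧ g ∘ g' = id ∧
          CauchyContCode d'₀ d'₁ g ∧ CauchyContCode d'₁ d'₀ g')) := by
  constructor
  · intro H
    letI : MetricSpace (NatM d₀) := metricOf d₀ h₀
    letI : MetricSpace (NatM d₁) := metricOf d₁ h₁
    let X₀ := UniformSpace.Completion (NatM d₀)
    let X₁ := UniformSpace.Completion (NatM d₁)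
    let ι₀ : ℕ → X₀ := UniformSpace.Completion.coe' (α := NatM d₀)
    let ι₁ : ℕ → X₁ := UniformSpace.Completion.coe' (α := NatM d₁)
    have hc₀ : CodesCompletion d₀ ι₀ :=
      ⟨fun m n => UniformSpace.Completion.dist_eq (α := NatM d₀) m n,
        UniformSpace.Completion.denseRange_coe (α := NatM d₀)⟩
    have hc₁ : CodesCompletion d₁ ι₁ :=
      ⟨fun m n => UniformSpace.Completion.dist_eq (α := NatM d₁) m n,
        UniformSpace.Completion.denseRange_coe (α := NatM d₁)⟩
    obtain ⟨hom⟩ := H X₀ ι₀ hc₀ X₁ ι₁ hc₁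
    exact forward_construction d₀ d₁ hc₀ hc₁ hom h₀
  · rintro ⟨d'₀, d'₁, hm₀, hm₁, ⟨i₀, hi₀⟩, ⟨i₁, hi₁⟩, g, g', hgg', hg'g, hg, hg'⟩
    intro X₀ m₀ c₀ ι₀ hι₀ X₁ m₁ c₁ ι₁ hι₁
    obtain ⟨ι'₀, hι'₀, -⟩ := completes_of_denseIsom hm₀ hι₀ hi₀
    obtain ⟨ι'₁, hι'₁, -⟩ := completes_of_denseIsom hm₁ hι₁ hi₁
    exact homeo_of_codes hι'₀ hι'₁ hgg' hg'g hg hg'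
end
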